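/- Let H₀ ⊂ H be a finite-dimensional subspace of dimension M invariant under a bounded self-adjoint operator A, and let w₁,…,w_N ∈ H₀ be an ε-almost orthonormal set of eigenvectors of A with ε < 1/(2(M+1)). Then there exist orthonormal vectors w′₁,…,w′_{M−N} ∈ H₀, orthogonal to each w_j, and real numbers μ′_j such that ‖(A − μ′_j)w′_j‖ < 4Mε for all j. -/

import Mathlib

/-!
Let `W` be the span of the `w_j` in `H₀` and `K` its orthogonal complement in `H₀`, of dimension
at least `M - N`. The compression of `A` to `K` is self-adjoint, so it has an orthonormal
eigenbasis `x_i` with eigenvalues `λ_i`, and then `p = (A - λ_i) x_i` lies in `W`. As `x_i ⊥ w_k`,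
self-adjointness gives `⟪w_k, p⟫ = ⟪(A - μ_k) w_k, x_i⟫`, of size at most `ε`. Writing
`p = ∑ c_k w_k`, the Gram matrix of the `w_k` is entrywise `ε`-close to the identity, so
`∑ |c_k|² - ε (∑ |c_k|)² ≤ ‖p‖² ≤ ε ∑ |c_k|`; with Cauchy–Schwarz this yields
`‖p‖² ≤ 2 N ε² < (4 M ε)²`.
-/

open Finset RCLike
open scoped InnerProductSpace ComplexConjugate

section AlmostOrthonormal

variable {𝕜 E ι : Type*} [RCLike 𝕜] [NormedAddCommGroup E] [InnerProductSpace 𝕜 E]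

theorem norm_inner_sub_ite_le [DecidableEq ι] {w : ι → E} {ε : ℝ}
    (h1 : ∀ j, |‖w j‖ ^ 2 - 1| < ε) (h2 : ∀ j k, j ≠ k → ‖⟪w j, w k⟫_𝕜‖ < ε) (j k : ι) :
    ‖⟪w j, w k⟫_𝕜 - if j = k then 1 else 0‖ ≤ ε := by
  by_cases hjk : j = k
  · subst hjk
    have : ⟪w j, w j⟫_𝕜 - 1 = ((‖w j‖ ^ 2 - 1 : ℝ) : 𝕜) := by
      push_cast [inner_self_eq_norm_sq_to_K]; rfl
    rw [if_pos rfl, this, norm_ofReal]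
    exact (h1 j).le
  · simpa [hjk] using (h2 j k hjk).le

theorem inner_sum_smul_sum_smul_self [Fintype ι] (w : ι → E) (c : ι → 𝕜) :
    ⟪∑ k, c k • w k, ∑ k, c k • w k⟫_𝕜 = ∑ j, ∑ k, conj (c j) * c k * ⟪w j, w k⟫_𝕜 := by
  simp only [sum_inner, inner_sum, inner_smul_left, inner_smul_right, mul_sum, mul_assoc]
  rw [sum_comm]
  exact sum_congr rfl fun j _ => sum_congr rfl fun k _ => mul_left_comm _ _ _

theorem sum_norm_sq_sub_le_norm_sum_smul_sq [Fintype ι] [DecidableEq ι] {w : ι → E} {ε : ℝ}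
    (hw : ∀ j k, ‖⟪w j, w k⟫_𝕜 - if j = k then 1 else 0‖ ≤ ε) (c : ι → 𝕜) :
    ∑ k, ‖c k‖ ^ 2 - ε * (∑ k, ‖c k‖) ^ 2 ≤ ‖∑ k, c k • w k‖ ^ 2 := by
  have hsplit : ((‖∑ k, c k • w k‖ ^ 2 : ℝ) : 𝕜) - ((∑ k, ‖c k‖ ^ 2 : ℝ) : 𝕜) =
      ∑ j, ∑ k, conj (c j) * c k * (⟪w j, w k⟫_𝕜 - if j = k then 1 else 0) := by
    simp only [mul_sub, sum_sub_distrib, mul_ite, mul_one, mul_zero, sum_ite_eq, mem_univ,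
      if_true, ← inner_sum_smul_sum_smul_self, RCLike.conj_mul]
    push_cast [inner_self_eq_norm_sq_to_K]; rfl
  have hbound : ‖∑ j, ∑ k, conj (c j) * c k * (⟪w j, w k⟫_𝕜 - if j = k then 1 else 0)‖ ≤
      ε * (∑ k, ‖c k‖) ^ 2 := by
    rw [sq, sum_mul_sum, mul_sum]
    refine (norm_sum_le _ _).trans (sum_le_sum fun j _ => ?_)
    rw [mul_sum]
    refine (norm_sum_le _ _).trans (sum_le_sum fun k _ => ?_)
    rw [norm_mul, norm_mul, norm_conj, mul_comm ε]
    exact mul_le_mul_of_nonneg_left (hw j k) (by positivity)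
  rw [← hsplit, ← ofReal_sub, norm_ofReal] at hbound
  linarith [neg_abs_le (‖∑ k, c k • w k‖ ^ 2 - ∑ k, ‖c k‖ ^ 2)]

theorem norm_sum_smul_sq_le_of_norm_inner_le [Fintype ι] {w : ι → E} {δ : ℝ} (c : ι → 𝕜)
    (hδ : ∀ k, ‖⟪w k, ∑ j, c j • w j⟫_𝕜‖ ≤ δ) :
    ‖∑ k, c k • w k‖ ^ 2 ≤ δ * ∑ k, ‖c k‖ :=
  calc ‖∑ k, c k • w k‖ ^ 2 = re ⟪∑ k, c k • w k, ∑ j, c j • w j⟫_𝕜 :=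
        (inner_self_eq_norm_sq _).symm
    _ ≤ ‖⟪∑ k, c k • w k, ∑ j, c j • w j⟫_𝕜‖ := re_le_norm _
    _ = ‖∑ k, conj (c k) * ⟪w k, ∑ j, c j • w j⟫_𝕜‖ := by
        simp only [sum_inner, inner_smul_left]
    _ ≤ ∑ k, ‖c k‖ * δ := by
        refine (norm_sum_le _ _).trans (sum_le_sum fun k _ => ?_)
        rw [norm_mul, norm_conj]
        exact mul_le_mul_of_nonneg_left (hδ k) (norm_nonneg _)
    _ = δ * ∑ k, ‖c k‖ := by rw [mul_sum]; exact sum_congr rfl fun k _ => mul_comm _ _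

theorem norm_sum_smul_sq_le_of_almost_orthonormal [Fintype ι] [DecidableEq ι] {w : ι → E}
    {ε δ : ℝ} (hw : ∀ j k, ‖⟪w j, w k⟫_𝕜 - if j = k then 1 else 0‖ ≤ ε)
    (hε : Fintype.card ι * ε ≤ 1 / 2) (c : ι → 𝕜)
    (hδ : ∀ k, ‖⟪w k, ∑ j, c j • w j⟫_𝕜‖ ≤ δ) :
    ‖∑ k, c k • w k‖ ^ 2 ≤ 2 * Fintype.card ι * δ ^ 2 := by
  have hlower := sum_norm_sq_sub_le_norm_sum_smul_sq hw c
  have hupper := norm_sum_smul_sq_le_of_norm_inner_le c hδ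
  have hcs : (∑ k, ‖c k‖) ^ 2 ≤ Fintype.card ι * ∑ k, ‖c k‖ ^ 2 := by
    simpa using sq_sum_le_card_mul_sum_sq (s := univ) (f := fun k => ‖c k‖)
  set s := ∑ k, ‖c k‖
  have hs : 0 ≤ s := sum_nonneg fun k _ => norm_nonneg _
  -- Combining the three bounds, `s ^ 2 ≤ N δ s + s ^ 2 / 2`, so `s ≤ 2 N δ`.
  have hs_le : s ^ 2 ≤ 2 * Fintype.card ι * δ * s := by nlinarith
  rcases hs.eq_or_lt with hs0 | hs0
  · rw [← hs0, mul_zero] at hupper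
    exact hupper.trans (by positivity)
  · have : s ≤ 2 * Fintype.card ι * δ := le_of_mul_le_mul_right (by nlinarith) hs0
    nlinarith

end AlmostOrthonormal

namespace LinearMap.IsSymmetric

variable {𝕜 E ι : Type*} [RCLike 𝕜] [NormedAddCommGroup E] [InnerProductSpace 𝕜 E]
  {T : E →ₗ[𝕜] E}

theorem orthogonalProjectionOnto_comp (hT : T.IsSymmetric) (K : Submodule 𝕜 E)
    [K.HasOrthogonalProjection] :
    (K.orthogonalProjectionOnto.toLinearMap ∘ₗ T ∘ₗ K.subtype).IsSymmetric := by
  intro x y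
  simp only [LinearMap.comp_apply, ContinuousLinearMap.coe_coe, Submodule.subtype_apply,
    Submodule.inner_orthogonalProjectionOnto_eq_of_mem_right,
    Submodule.inner_orthogonalProjectionOnto_eq_of_mem_left]
  exact hT _ _

theorem exists_orthonormalBasis_sub_smul_mem_orthogonal (hT : T.IsSymmetric)
    (K : Submodule 𝕜 E) [FiniteDimensional 𝕜 K] :
    ∃ (b : OrthonormalBasis (Fin (Module.finrank 𝕜 K)) 𝕜 K) (lam : Fin (Module.finrank 𝕜 K) → ℝ),
      ∀ i, T (b i) - (lam i : 𝕜) • (b i : E) ∈ Kᗮ := by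
  have hS := hT.orthogonalProjectionOnto_comp K
  refine ⟨hS.eigenvectorBasis rfl, hS.eigenvalues rfl, fun i => ?_⟩
  have heigen := congrArg Subtype.val (hS.apply_eigenvectorBasis rfl i)
  simp only [LinearMap.comp_apply, ContinuousLinearMap.coe_coe, Submodule.subtype_apply,
    Submodule.coe_smul] at heigen
  rw [← heigen]
  exact K.sub_starProjection_mem_orthogonal _

theorem inner_sub_smul_eq_of_inner_eq_zero (hT : T.IsSymmetric) {v x : E} (h : ⟪v, x⟫_𝕜 = 0)
    (a b : 𝕜) : ⟪v, T x - a • x⟫_𝕜 = ⟪T v - b • v, x⟫_𝕜 := by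
  rw [inner_sub_right, inner_smul_right, inner_sub_left, inner_smul_left, h, hT, mul_zero, mul_zero]

theorem norm_apply_sub_smul_sq_le [Fintype ι] [DecidableEq ι] (hT : T.IsSymmetric)
    {w : ι → E} {ε : ℝ} (hw : ∀ j k, ‖⟪w j, w k⟫_𝕜 - if j = k then 1 else 0‖ ≤ ε)
    (hε : Fintype.card ι * ε ≤ 1 / 2) {μ : ι → ℝ}
    (hμ : ∀ k, ‖T (w k) - (μ k : 𝕜) • w k‖ ≤ ε) {x : E} (hx : ‖x‖ ≤ 1)
    (hxw : ∀ k, ⟪w k, x⟫_𝕜 = 0) {lam : ℝ}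
    (hmem : T x - (lam : 𝕜) • x ∈ Submodule.span 𝕜 (Set.range w)) :
    ‖T x - (lam : 𝕜) • x‖ ^ 2 ≤ 2 * Fintype.card ι * ε ^ 2 := by
  obtain ⟨c, hc⟩ := (Submodule.mem_span_range_iff_exists_fun 𝕜).mp hmem
  rw [← hc]
  refine norm_sum_smul_sq_le_of_almost_orthonormal hw hε c fun k => ?_
  rw [hc, hT.inner_sub_smul_eq_of_inner_eq_zero (hxw k) _ (μ k : 𝕜)]
  calc ‖⟪T (w k) - (μ k : 𝕜) • w k, x⟫_𝕜‖ ≤ ‖T (w k) - (μ k : 𝕜) • w k‖ * ‖x‖ :=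
        norm_inner_le_norm _ _
    _ ≤ ε * 1 := mul_le_mul (hμ k) hx (norm_nonneg _) ((norm_nonneg _).trans (hμ k))
    _ = ε := mul_one ε

end LinearMap.IsSymmetric

/-- if `H₀ ⊆ H` has dimension `M`, is invariant under the bounded
self-adjoint operator `A`, and `w₁,…,w_N ∈ H₀` is an `ε`-almost orthonormal set of
eigenvectors of `A` with `ε < 1/(2(M+1))`, then there are orthonormal
`w′₁,…,w′_{M−N} ∈ H₀`, orthogonal to all the `w_j`, and reals `μ′_j` with
`‖(A − μ′_j) w′_j‖ < 4Mε`. -/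
theorem almost_invariant_complement
    {H : Type*} [NormedAddCommGroup H] [InnerProductSpace ℂ H] [CompleteSpace H]
    (A : H →L[ℂ] H) (hA : IsSelfAdjoint A)
    (H₀ : Submodule ℂ H) [FiniteDimensional ℂ H₀] (M : ℕ)
    (hdim : Module.finrank ℂ H₀ = M)
    (hinv : ∀ x ∈ H₀, A x ∈ H₀)
    (N : ℕ) (w : Fin N → H) (hw : ∀ j, w j ∈ H₀)
    (ε : ℝ) (hε0 : 0 < ε) (hε : ε < 1 / (2 * ((M : ℝ) + 1)))
    (h1 : ∀ j, |‖w j‖ ^ 2 - 1| < ε)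
    (h2 : ∀ j k, j ≠ k → ‖(inner ℂ (w j) (w k) : ℂ)‖ < ε)
    (μ : Fin N → ℝ) (h3 : ∀ j, ‖A (w j) - (μ j : ℂ) • w j‖ < ε) :
    ∃ w' : Fin (M - N) → H,
      (∀ j, w' j ∈ H₀) ∧ Orthonormal ℂ w' ∧
      (∀ j k, (inner ℂ (w j) (w' k) : ℂ) = 0) ∧
      ∃ μ' : Fin (M - N) → ℝ, ∀ j, ‖A (w' j) - (μ' j : ℂ) • w' j‖ < 4 * M * ε := by
  have hT := hA.isSymmetric.restrict_invariant hinv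
  let v : Fin N → H₀ := fun j => ⟨w j, hw j⟩
  let W := Submodule.span ℂ (Set.range v)
  obtain ⟨b, lam, hb⟩ := hT.exists_orthonormalBasis_sub_smul_mem_orthogonal Wᗮ
  rw [W.orthogonal_orthogonal] at hb
  have hMN : M - N ≤ Module.finrank ℂ Wᗮ := by
    have hsum := W.finrank_add_finrank_orthogonal
    have hW : Module.finrank ℂ W ≤ N := by
      simpa [Set.finrank] using finrank_range_le_card (R := ℂ) v
    rw [hdim] at hsum
    omega
  let e := Fin.castLE hMN
  have hbw : ∀ j k, ⟪v j, (b k : H₀)⟫_ℂ = 0 := fun j k =>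
    Submodule.inner_right_of_mem_orthogonal (Submodule.subset_span (Set.mem_range_self j)) (b k).2
  refine ⟨fun j => b (e j), fun j => (b (e j) : H₀).2,
    (b.orthonormal.comp e (Fin.castLE_injective hMN)).comp_linearIsometry Wᗮ.subtypeₗᵢ
      |>.comp_linearIsometry H₀.subtypeₗᵢ,
    fun j k => hbw j (e k), fun j => lam (e j), fun j => ?_⟩
  have hNM : N < M := by have := j.isLt; omega
  have hNε : (N : ℝ) * ε ≤ 1 / 2 := by
    have hNM' : (N : ℝ) < M := by exact_mod_cast hNM
    rw [lt_div_iff₀ (by positivity)] at hε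
    nlinarith
  have hsq := hT.norm_apply_sub_smul_sq_le (norm_inner_sub_ite_le (w := v) h1 h2)
    (by simpa using hNε) (fun k => (h3 k).le) (b.orthonormal.1 (e j)).le
    (fun k => hbw k (e j)) (hb (e j))
  rw [Fintype.card_fin] at hsq
  have hM : (1 : ℝ) ≤ M := by exact_mod_cast hNM.pos
  refine lt_of_pow_lt_pow_left₀ 2 (by positivity) (hsq.trans_lt ?_)
  have hNM' : 2 * (N : ℝ) < 16 * M ^ 2 := by
    nlinarith [show (N : ℝ) < M by exact_mod_cast hNM]
  nlinarith [mul_lt_mul_of_pos_right hNM' (by positivity : 0 < ε ^ 2)]
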